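/- arXiv:2410.14899 — 2 statements merged into one kernel-verified Lean document; each statement's English description precedes it below -/
import Mathlib

section
/- Let w_1, ..., w_{N+1} be positive reals with w_lo ≤ w_i ≤ w_hi for all i, and let α ∈ (0,1). Define S = ∑_{j=1}^{N+1} w_j and let T = ∑_{i=1}^{N+1} (w_i/S) · 𝟙{∑_{j=1}^{i} w_j < α·S}. Then T ≥ α − w_hi/S ≥ α − (1/(N+1))·(w_hi/w_lo). -/
open Finset

theorem stmt1 (N : ℕ) (w : Fin (N + 1) → ℝ) (w_lo w_hi : ℝ)
    (hlo : 0 < w_lo) (hbdd : ∀ i, w_lo ≤ w i ∧ w i ≤ w_hi)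
    (α : ℝ) (hα : α ∈ Set.Ioo (0 : ℝ) 1)
    (S : ℝ) (hS : S = ∑ j, w j)
    (T : ℝ)
    (hT : T = ∑ i, (w i / S) *
      (if (∑ j ∈ Finset.univ.filter (fun j => j ≤ i), w j) < α * S then (1 : ℝ) else 0)) :
    α - w_hi / S ≤ T ∧ α - (1 / (N + 1)) * (w_hi / w_lo) ≤ α - w_hi / S := by
  obtain ⟨hα0, hα1⟩ := hα
  have hwpos : ∀ i, 0 < w i := fun i => lt_of_lt_of_le hlo (hbdd i).1
  have hSpos : 0 < S := by
    rw [hS]; exact Finset.sum_pos (fun i _ => hwpos i) univ_nonempty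
  have hhi : 0 < w_hi := lt_of_lt_of_le hlo ((hbdd 0).1.trans (hbdd 0).2)
  set P : Fin (N + 1) → ℝ := fun i => ∑ j ∈ univ.filter (fun j => j ≤ i), w j with hP
  have hmono : ∀ j k : Fin (N + 1), j ≤ k → P j ≤ P k := by
    intro j k hjk
    apply Finset.sum_le_sum_of_subset_of_nonneg
    · intro x hx
      simp only [Finset.mem_filter, Finset.mem_univ, true_and] at hx ⊢
      exact hx.trans hjk
    · intro i _ _; exact (hwpos i).le
  set A := univ.filter (fun i : Fin (N + 1) => P i < α * S) with hA
  have hT' : T = (∑ i ∈ A, w i) / S := by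
    rw [hT, Finset.sum_div, hA, Finset.sum_filter]
    congr 1; ext i
    by_cases h : P i < α * S <;> simp [h, hP]
  have key : α * S - w_hi ≤ ∑ i ∈ A, w i := by
    by_cases hAall : A = univ
    · rw [hAall, ← hS]
      nlinarith
    · have hne : (univ.filter (fun i : Fin (N + 1) => ¬ P i < α * S)).Nonempty := by
        by_contra h
        rw [Finset.not_nonempty_iff_eq_empty, Finset.filter_eq_empty_iff] at h
        exact hAall (by rw [hA, Finset.filter_true_of_mem (fun i hi => not_not.mp (h hi))])
      set i₀ := Finset.min' _ hne with hi₀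
      have hi₀mem := Finset.min'_mem _ hne
      rw [Finset.mem_filter, not_lt] at hi₀mem
      have hAeq : A = univ.filter (fun j => j < i₀) := by
        ext j
        simp only [hA, Finset.mem_filter, Finset.mem_univ, true_and]
        constructor
        · intro hj
          by_contra hc
          push_neg at hc
          exact absurd (lt_of_le_of_lt (hi₀mem.2.trans (hmono i₀ j hc)) hj) (lt_irrefl _)
        · intro hj
          by_contra hc
          have : i₀ ≤ j := Finset.min'_le _ j (by simp only [Finset.mem_filter, Finset.mem_univ, true_and]; exact hc)
          exact absurd (lt_of_lt_of_le hj this) (lt_irrefl _)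
      have hsplit : P i₀ = (∑ j ∈ univ.filter (fun j => j < i₀), w j) + w i₀ := by
        have hins : univ.filter (fun j => j ≤ i₀) = insert i₀ (univ.filter (fun j => j < i₀)) := by
          ext j
          simp only [Finset.mem_filter, Finset.mem_univ, true_and, Finset.mem_insert]
          rw [le_iff_lt_or_eq, or_comm]
        show (∑ j ∈ univ.filter (fun j => j ≤ i₀), w j) = _
        rw [hins, Finset.sum_insert (by simp)]
        ring
      rw [hAeq]
      have h1 : α * S ≤ P i₀ := hi₀mem.2
      have h2 : w i₀ ≤ w_hi := (hbdd i₀).2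
      linarith [hsplit]
  constructor
  · rw [hT']
    have : α - w_hi / S = (α * S - w_hi) / S := by field_simp
    rw [this]
    gcongr
  · have hSge : ((N : ℝ) + 1) * w_lo ≤ S := by
      rw [hS]
      calc ((N : ℝ) + 1) * w_lo = ∑ _j : Fin (N + 1), w_lo := by
            rw [Finset.sum_const, Finset.card_univ, Fintype.card_fin, nsmul_eq_mul]
            push_cast; ring
        _ ≤ ∑ j, w j := Finset.sum_le_sum (fun i _ => (hbdd i).1)
    have hpos : (0 : ℝ) < ((N : ℝ) + 1) * w_lo := by positivity
    have : w_hi / S ≤ w_hi / (((N : ℝ) + 1) * w_lo) :=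
      div_le_div_of_nonneg_left hhi.le hpos hSge
    have heq : w_hi / (((N : ℝ) + 1) * w_lo) = (1 / (N + 1)) * (w_hi / w_lo) := by
      field_simp
    rw [heq] at this
    linarith
end

section
/- Fix σ₁, σ₂ > 0 and α ∈ (0.5, 1). The function g(s) = Φ((σ₂/σ₁)Φ⁻¹(α) − s/σ₁) − Φ(−(σ₂/σ₁)Φ⁻¹(α) − s/σ₁) is strictly decreasing in s for s > 0, and g(s) → 0 as s → ∞. -/
open MeasureTheory ProbabilityTheory Filter

/-- Standard normal CDF. -/
noncomputable def Phi (t : ℝ) : ℝ := ((gaussianReal 0 1) (Set.Iic t)).toReal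

/-- Standard normal quantile function. -/
noncomputable def PhiInv (p : ℝ) : ℝ := sInf {t : ℝ | p ≤ Phi t}

/-! With `c = (σ₂/σ₁) Φ⁻¹(α)` and `t = s/σ₁`, `g(s) = Φ(c - t) - Φ(-c - t)` is the
standard normal mass of the window `(-c - t, c - t]`. Since `α > 1/2` gives `c > 0`, the
derivative in `t` is `φ(-c - t) - φ(c - t) < 0` for `t > 0`, because `c - t` is closer to
the mode `0` than `-c - t`. As `t → ∞` both CDF values tend to `0`. -/

open Set Topology

lemma gaussianPDFReal_lt_of_abs_sub_lt {μ : ℝ} {v : NNReal} (hv : v ≠ 0) {x y : ℝ}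
    (h : |x - μ| < |y - μ|) : gaussianPDFReal μ v y < gaussianPDFReal μ v x := by
  have hv' : (0 : ℝ) < v := by positivity
  have hsq : (x - μ) ^ 2 < (y - μ) ^ 2 := sq_lt_sq.mpr h
  simp only [gaussianPDFReal_def]
  gcongr

lemma Phi_eq_cdf : Phi = cdf (gaussianReal 0 1) := by
  ext t
  rw [cdf_eq_real]
  rfl

lemma tendsto_Phi_atBot : Tendsto Phi atBot (𝓝 0) := Phi_eq_cdf ▸ tendsto_cdf_atBot _

lemma tendsto_Phi_atTop : Tendsto Phi atTop (𝓝 1) := Phi_eq_cdf ▸ tendsto_cdf_atTop _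

lemma Phi_eq_integral (t : ℝ) : Phi t = ∫ x in Iic t, gaussianPDFReal 0 1 x := by
  rw [Phi, gaussianReal_apply_eq_integral 0 one_ne_zero]
  exact ENNReal.toReal_ofReal (integral_nonneg (gaussianPDFReal_nonneg 0 1))

lemma hasDerivAt_Phi (t : ℝ) : HasDerivAt Phi (gaussianPDFReal 0 1 t) t := by
  have hint := integrable_gaussianPDFReal 0 1
  have hPhi : Phi = fun u => Phi 0 + ∫ x in (0 : ℝ)..u, gaussianPDFReal 0 1 x := by
    ext u
    rw [Phi_eq_integral, Phi_eq_integral,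
      ← intervalIntegral.integral_Iic_sub_Iic hint.integrableOn hint.integrableOn]
    ring
  rw [hPhi]
  refine (intervalIntegral.integral_hasDerivAt_right hint.intervalIntegrable
    hint.aestronglyMeasurable.stronglyMeasurableAtFilter ?_).const_add _
  rw [gaussianPDFReal_def]
  fun_prop

lemma continuous_Phi : Continuous Phi :=
  continuous_iff_continuousAt.mpr fun t => (hasDerivAt_Phi t).continuousAt

lemma strictMono_Phi : StrictMono Phi :=
  strictMono_of_hasDerivAt_pos hasDerivAt_Phi (gaussianPDFReal_pos 0 1 · one_ne_zero)

lemma Phi_neg (t : ℝ) : Phi (-t) = 1 - Phi t := by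
  have hint := integrable_gaussianPDFReal 0 1
  have htotal :
      (∫ x in Iic t, gaussianPDFReal 0 1 x) + ∫ x in Ioi t, gaussianPDFReal 0 1 x = 1 := by
    rw [intervalIntegral.integral_Iic_add_Ioi hint.integrableOn hint.integrableOn]
    exact integral_gaussianPDFReal_eq_one 0 one_ne_zero
  have hsymm : Phi (-t) = ∫ x in Ioi t, gaussianPDFReal 0 1 x := by
    have heven : ∀ x, gaussianPDFReal 0 1 (-x) = gaussianPDFReal 0 1 x := by
      simp [gaussianPDFReal_def]
    rw [Phi_eq_integral, ← neg_neg t, ← integral_comp_neg_Iic, neg_neg]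
    simp only [heven]
  rw [hsymm, Phi_eq_integral]
  linarith

lemma Phi_zero : Phi 0 = 1 / 2 := by
  have h := Phi_neg 0
  rw [neg_zero] at h
  linarith

lemma le_Phi_PhiInv {p : ℝ} (hp₀ : 0 < p) (hp₁ : p < 1) : p ≤ Phi (PhiInv p) := by
  have hclosed : IsClosed {t : ℝ | p ≤ Phi t} := isClosed_le continuous_const continuous_Phi
  have hne : {t : ℝ | p ≤ Phi t}.Nonempty :=
    (tendsto_Phi_atTop.eventually (eventually_ge_nhds hp₁)).exists
  obtain ⟨b, hb⟩ :=
    (tendsto_Phi_atBot.eventually (eventually_lt_nhds hp₀)).exists_forall_of_atBot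
  have hbdd : BddBelow {t : ℝ | p ≤ Phi t} :=
    ⟨b, fun t ht => le_of_not_gt fun htb => (hb t htb.le).not_ge ht⟩
  exact hclosed.csInf_mem hne hbdd

lemma PhiInv_pos {p : ℝ} (hp : p ∈ Ioo (1 / 2 : ℝ) 1) : 0 < PhiInv p := by
  have h := le_Phi_PhiInv (by linarith [hp.1]) hp.2
  rw [← strictMono_Phi.lt_iff_lt, Phi_zero]
  linarith [hp.1]

lemma strictAntiOn_Phi_sub_Phi {c : ℝ} (hc : 0 < c) :
    StrictAntiOn (fun t => Phi (c - t) - Phi (-c - t)) (Ioi 0) := by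
  have hderiv : ∀ a t, HasDerivAt (fun t => Phi (a - t)) (-gaussianPDFReal 0 1 (a - t)) t :=
    fun a t => by
      simpa [Function.comp_def] using
        (hasDerivAt_Phi (a - t)).comp t ((hasDerivAt_id t).const_sub a)
  refine strictAntiOn_of_hasDerivWithinAt_neg (convex_Ioi 0)
    (fun t _ => (((hderiv c t).sub (hderiv (-c) t)).continuousAt).continuousWithinAt)
    (fun t _ => ((hderiv c t).sub (hderiv (-c) t)).hasDerivWithinAt) fun t ht => ?_
  have ht : 0 < t := by rwa [interior_Ioi] at ht
  have hcloser : |c - t - 0| < |-c - t - 0| := by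
    rw [sub_zero, sub_zero, abs_of_neg (a := -c - t) (by linarith)]
    exact abs_lt.mpr ⟨by linarith, by linarith⟩
  linarith [gaussianPDFReal_lt_of_abs_sub_lt one_ne_zero hcloser]

lemma tendsto_Phi_sub_Phi_atTop (a b : ℝ) :
    Tendsto (fun t => Phi (a - t) - Phi (b - t)) atTop (𝓝 0) := by
  have hbot : ∀ a : ℝ, Tendsto (fun t => Phi (a - t)) atTop (𝓝 0) := fun a =>
    tendsto_Phi_atBot.comp (tendsto_atBot_add_const_left _ a tendsto_neg_atTop_atBot)
  simpa using (hbot a).sub (hbot b)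

theorem stmt9 (σ₁ σ₂ : ℝ) (hσ₁ : 0 < σ₁) (hσ₂ : 0 < σ₂)
    (α : ℝ) (hα : α ∈ Set.Ioo (1 / 2 : ℝ) 1)
    (g : ℝ → ℝ)
    (hg : g = fun s => Phi ((σ₂ / σ₁) * PhiInv α - s / σ₁) -
      Phi (-(σ₂ / σ₁) * PhiInv α - s / σ₁)) :
    StrictAntiOn g (Set.Ioi 0) ∧ Tendsto g atTop (nhds 0) := by
  set c := (σ₂ / σ₁) * PhiInv α
  have hc : 0 < c := mul_pos (div_pos hσ₂ hσ₁) (PhiInv_pos hα)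
  have hg' : g = (fun t => Phi (c - t) - Phi (-c - t)) ∘ (· / σ₁) := by
    rw [hg, neg_mul]
    rfl
  rw [hg']
  exact ⟨(strictAntiOn_Phi_sub_Phi hc).comp_strictMonoOn
      (fun _ _ _ _ h => div_lt_div_of_pos_right h hσ₁) fun _ hs => div_pos hs hσ₁,
    (tendsto_Phi_sub_Phi_atTop c (-c)).comp (tendsto_id.atTop_div_const hσ₁)⟩
end
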